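/- A graph admits a perfect elimination order of its vertices if and only if it is chordal. -/

import Mathlib

open SimpleGraph

/-- A graph is chordal if every cycle of length ≥ 4 has a chord. -/
def IsChordal {V : Type*} (G : SimpleGraph V) : Prop :=
  ∀ (v : V) (w : G.Walk v v), w.IsCycle → 4 ≤ w.length →
    ∃ a b, a ∈ w.support ∧ b ∈ w.support ∧ G.Adj a b ∧ s(a, b) ∉ w.edges

/-- `σ` is a perfect elimination order of `G` if for every vertex `σ i`, its
neighbours among the later vertices `σ j`, `j > i`, form a complete subgraph. -/
def IsPEO {V : Type*} (G : SimpleGraph V) {n : ℕ} (σ : Fin n ≃ V) : Prop :=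
  ∀ i : Fin n, G.IsClique {u | G.Adj (σ i) u ∧ ∃ j, i < j ∧ σ j = u}

/-!
A perfect elimination order gives a chord of every long cycle: the two cycle-neighbours of the
earliest vertex of the cycle come later, so they are adjacent, and on a cycle of length at least
four they are not consecutive.

Conversely (Dirac), let `a, b` be non-adjacent in a chordal graph. Let `B` be the component of
`b` outside the closed neighbourhood of `a`, `S` the set of outside neighbours of `B`, and `A`
the component of `a` after removing `S` and `B`. Then `A` and `B` are full components of the
complement of `S`, so any two vertices of `S` are joined by chordless paths through `A` and
through `B`; these form a cycle whose only possible chord joins their ends, hence `S` is a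
clique. Induction applied to `B ∪ S` (or `A ∪ S`) yields a simplicial vertex that avoids any
prescribed clique, and deleting simplicial vertices one at a time produces the order.
-/

namespace SimpleGraph.Walk

variable {V : Type*} {G : SimpleGraph V} {u v : V}

lemma exists_shorter_of_not_isChordless {p : G.Walk u v} (hp : ¬p.IsChordless) :
    ∃ q : G.Walk u v, q.length < p.length ∧ q.support ⊆ p.support := by
  obtain ⟨x, y, hx, hy, hxy, hxy_notMem⟩ : ∃ x y, x ∈ p.support ∧ y ∈ p.support ∧
      G.Adj x y ∧ s(x, y) ∉ p.edges := by
    simpa [isChordless_iff_forall_mem_edges] using hp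
  obtain ⟨i, rfl, hi⟩ := mem_support_iff_exists_getVert.mp hx
  obtain ⟨j, rfl, hj⟩ := mem_support_iff_exists_getVert.mp hy
  clear hx hy
  wlog hij : i < j generalizing i j
  · have hne : i ≠ j := by rintro rfl; exact hxy.ne rfl
    exact this j hj i hi hxy.symm (by rwa [Sym2.eq_swap]) (by omega)
  have hgap : i + 1 < j := by
    by_contra h
    obtain rfl : j = i + 1 := by omega
    exact hxy_notMem ((mk_mem_edges_iff_exists p).mpr ⟨i, by omega, rfl⟩)
  refine ⟨(p.take i).append (cons hxy (p.drop j)), ?_, ?_⟩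
  · simp only [length_append, take_length, length_cons, drop_length]
    omega
  · intro z hz
    rw [mem_support_append_iff, support_take, support_cons, List.mem_cons,
      drop_support_eq_support_drop_min] at hz
    rcases hz with hz | rfl | hz
    · exact List.mem_of_mem_take hz
    · exact p.getVert_mem_support i
    · exact List.mem_of_mem_drop hz

theorem exists_isPath_isChordless_support_subset (p : G.Walk u v) :
    ∃ q : G.Walk u v, q.IsPath ∧ q.IsChordless ∧ q.support ⊆ p.support := by
  classical
  obtain ⟨q, hqp, hmin⟩ := (measure (length (G := G) (u := u) (v := v))).wf.has_min
    {q | q.support ⊆ p.support} ⟨p, List.Subset.refl _⟩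
  have hshortest : ∀ r : G.Walk u v, r.support ⊆ q.support → q.length ≤ r.length :=
    fun r hr => not_lt.mp (hmin r (List.Subset.trans hr hqp))
  refine ⟨q, ?_, ?_, hqp⟩
  · rw [← q.bypass_eq_self_of_length_le_length_bypass
      (hshortest _ q.support_bypass_subset_support)]
    exact q.bypass_isPath
  · by_contra h
    obtain ⟨r, hr, hrq⟩ := exists_shorter_of_not_isChordless h
    exact (hshortest r hrq).not_gt hr

theorem IsCycle.snd_penultimate_notMem_edges {c : G.Walk u u} (hc : c.IsCycle)
    (hlen : 4 ≤ c.length) : s(c.snd, c.penultimate) ∉ c.edges := by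
  rw [mk_mem_edges_iff_exists]
  rintro ⟨i, hi, hedge⟩
  have hinj := hc.getVert_injOn
  have hend := fun k (hk : k ≤ c.length) => hc.getVert_endpoint_iff hk
  simp only [Set.InjOn, Set.mem_ofPred_eq] at hinj
  rw [Sym2.eq_iff] at hedge
  rcases hedge with ⟨h1, h2⟩ | ⟨h1, h2⟩
  · rcases Nat.eq_zero_or_pos i with rfl | hi0
    · have := (hend 1 (by omega)).mp (h1.symm.trans c.getVert_zero)
      omega
    · have := hinj ⟨by omega, by omega⟩ ⟨le_refl 1, by omega⟩ h1
      subst this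
      have := hinj ⟨by omega, by omega⟩ ⟨by omega, by omega⟩ h2
      omega
  · rcases Nat.eq_zero_or_pos i with rfl | hi0
    · have := (hend (c.length - 1) (by omega)).mp (h1.symm.trans c.getVert_zero)
      omega
    · have := hinj ⟨by omega, by omega⟩ ⟨by omega, by omega⟩ h1
      rw [show i + 1 = c.length by omega, c.getVert_length] at h2
      have := (hend 1 (by omega)).mp h2.symm
      omega

end SimpleGraph.Walk

section

variable {V : Type*} {G : SimpleGraph V}

theorem IsPEO.isChordal {n : ℕ} {σ : Fin n ≃ V} (hσ : IsPEO G σ) : IsChordal G := by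
  classical
  intro v w hw hlen
  obtain ⟨x, hx, hx_min⟩ := w.support.toFinset.exists_min_image σ.symm ⟨v, by simp⟩
  rw [List.mem_toFinset] at hx
  set c := w.rotate x hx
  have hc : c.IsCycle := hw.rotate hx
  have hc_len : 4 ≤ c.length := by simpa [c] using hlen
  have hc_support (z) : z ∈ c.support ↔ z ∈ w.support := w.mem_support_rotate_iff x hx
  have hlater : ∀ z ∈ c.support, z ≠ x → G.Adj x z →
      z ∈ {u | G.Adj (σ (σ.symm x)) u ∧ ∃ j, σ.symm x < j ∧ σ j = u} := by
    intro z hz hzx hxz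
    refine ⟨by simpa using hxz, σ.symm z, lt_of_le_of_ne ?_ ?_, by simp⟩
    · exact hx_min z (by simpa using (hc_support z).mp hz)
    · simpa [eq_comm] using hzx
  have hsnd : c.snd ≠ x := fun h => by
    have := (hc.getVert_endpoint_iff (i := 1) (by omega)).mp h
    omega
  have hpen : c.penultimate ≠ x := fun h => by
    have := (hc.getVert_endpoint_iff (i := c.length - 1) (by omega)).mp h
    omega
  have hchord : G.Adj c.snd c.penultimate :=
    hσ (σ.symm x) (hlater _ (c.getVert_mem_support 1) hsnd (c.adj_snd hc.not_nil))
      (hlater _ (c.getVert_mem_support _) hpen (c.adj_penultimate hc.not_nil).symm)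
      hc.snd_ne_penultimate
  exact ⟨c.snd, c.penultimate, (hc_support _).mp (c.getVert_mem_support 1),
    (hc_support _).mp (c.getVert_mem_support _), hchord,
    fun h => hc.snd_penultimate_notMem_edges hc_len ((w.rotate_edges x hx).perm.mem_iff.mpr h)⟩

end

namespace SimpleGraph

variable {V : Type*} {G : SimpleGraph V}

def componentWithin (G : SimpleGraph V) (X : Set V) (a : V) : Set V :=
  {z | ∃ p : G.Walk a z, ∀ w ∈ p.support, w ∈ X}

section componentWithin

variable {X : Set V} {a : V}

lemma componentWithin_subset : G.componentWithin X a ⊆ X :=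
  fun _ ⟨p, hp⟩ => hp _ p.end_mem_support

lemma mem_componentWithin_self (ha : a ∈ X) : a ∈ G.componentWithin X a :=
  ⟨.nil, by simpa using ha⟩

lemma mem_componentWithin_of_adj {z w : V} (hz : z ∈ G.componentWithin X a) (hw : w ∈ X)
    (hzw : G.Adj z w) : w ∈ G.componentWithin X a := by
  obtain ⟨p, hp⟩ := hz
  refine ⟨p.concat hzw, fun y hy => ?_⟩
  rw [Walk.support_concat, List.mem_append, List.mem_singleton] at hy
  rcases hy with hy | rfl
  · exact hp y hy
  · exact hw

lemma Walk.support_subset_componentWithin {u v : V} (p : G.Walk u v)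
    (hu : u ∈ G.componentWithin X a) (hp : ∀ z ∈ p.support, z ∈ X) :
    ∀ z ∈ p.support, z ∈ G.componentWithin X a := by
  induction p with
  | nil => simpa using hu
  | cons h q ih =>
    simp only [Walk.support_cons, List.mem_cons, forall_eq_or_imp] at hp ⊢
    exact ⟨hu, ih (mem_componentWithin_of_adj hu (hp.2 _ q.start_mem_support) h) hp.2⟩

lemma exists_walk_in_componentWithin {u v : V} (hu : u ∈ G.componentWithin X a)
    (hv : v ∈ G.componentWithin X a) :
    ∃ p : G.Walk u v, ∀ z ∈ p.support, z ∈ G.componentWithin X a := by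
  obtain ⟨p, hp⟩ := id hu
  obtain ⟨q, hq⟩ := hv
  refine ⟨p.reverse.append q, (p.reverse.append q).support_subset_componentWithin hu ?_⟩
  intro z hz
  rw [Walk.mem_support_append_iff, Walk.support_reverse, List.mem_reverse] at hz
  exact hz.elim (hp z) (hq z)

end componentWithin

structure IsFullComponent (G : SimpleGraph V) (s S C : Set V) : Prop where
  subset : C ⊆ s \ S
  nonempty : C.Nonempty
  adj_mem : ∀ u ∈ C, ∀ w ∈ s, G.Adj u w → w ∈ C ∪ S
  exists_walk : ∀ u ∈ C, ∀ v ∈ C, ∃ p : G.Walk u v, ∀ z ∈ p.support, z ∈ C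
  exists_adj : ∀ x ∈ S, ∃ u ∈ C, G.Adj x u

namespace IsFullComponent

variable {s S A B C : Set V}

lemma not_adj (hA : IsFullComponent G s S A) (hB : IsFullComponent G s S B) (hAB : Disjoint A B)
    {u w : V} (hu : u ∈ A) (hw : w ∈ B) : ¬G.Adj u w := fun huw =>
  (hA.adj_mem u hu w (hB.subset hw).1 huw).elim (hAB.notMem_of_mem_right hw) (hB.subset hw).2

lemma exists_walk_through (hC : IsFullComponent G s S C) {x y : V} (hx : x ∈ S) (hy : y ∈ S) :
    ∃ p : G.Walk x y, ∀ z ∈ p.support, z = x ∨ z = y ∨ z ∈ C := by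
  obtain ⟨u, hu, hxu⟩ := hC.exists_adj x hx
  obtain ⟨v, hv, hyv⟩ := hC.exists_adj y hy
  obtain ⟨p, hp⟩ := hC.exists_walk u hu v hv
  refine ⟨.cons hxu (p.concat hyv.symm), fun z hz => ?_⟩
  rw [Walk.support_cons, Walk.support_concat, List.mem_cons, List.mem_append,
    List.mem_singleton] at hz
  rcases hz with rfl | hz | rfl
  · exact .inl rfl
  · exact .inr (.inr (hp z hz))
  · exact .inr (.inl rfl)

end IsFullComponent

theorem exists_isFullComponent_pair {s : Set V} {a b : V} (ha : a ∈ s) (hb : b ∈ s)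
    (hab : a ≠ b) (hnadj : ¬G.Adj a b) :
    ∃ S A B, IsFullComponent G s S A ∧ IsFullComponent G s S B ∧ Disjoint A B := by
  set B := G.componentWithin (s \ insert a (G.neighborSet a)) b
  set S := {x | x ∈ s ∧ x ∉ B ∧ ∃ y ∈ B, G.Adj x y}
  set A := G.componentWithin (s \ (S ∪ B)) a
  have hB_sub : B ⊆ s \ insert a (G.neighborSet a) := componentWithin_subset
  have hbB : b ∈ B := mem_componentWithin_self ⟨hb, by simp [hab.symm, hnadj]⟩
  have hS_adj : ∀ x ∈ S, G.Adj a x := by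
    rintro x ⟨hxs, hxB, y, hyB, hxy⟩
    by_contra hax
    have hxa : x ≠ a := by
      rintro rfl
      exact (hB_sub hyB).2 (.inr hxy)
    exact hxB (mem_componentWithin_of_adj hyB ⟨hxs, by simp [hxa, hax]⟩ hxy.symm)
  have haA : a ∈ A := by
    refine mem_componentWithin_self ⟨ha, ?_⟩
    rintro (haS | haB)
    · exact (hS_adj a haS).ne rfl
    · exact (hB_sub haB).2 (.inl rfl)
  have hA_sub : A ⊆ s \ (S ∪ B) := componentWithin_subset
  refine ⟨S, A, B, ⟨?_, ⟨a, haA⟩, ?_, ?_, ?_⟩, ⟨?_, ⟨b, hbB⟩, ?_, ?_, ?_⟩,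
    Set.disjoint_left.mpr fun z hz hzB => (hA_sub hz).2 (.inr hzB)⟩
  · exact fun z hz => ⟨(hA_sub hz).1, fun hzS => (hA_sub hz).2 (.inl hzS)⟩
  · intro u hu w hws huw
    by_cases hwS : w ∈ S
    · exact .inr hwS
    by_cases hwB : w ∈ B
    · exact absurd (.inl ⟨(hA_sub hu).1, fun huB => (hA_sub hu).2 (.inr huB), w, hwB, huw⟩)
        (hA_sub hu).2
    · exact .inl (mem_componentWithin_of_adj hu ⟨hws, by simp [hwS, hwB]⟩ huw)
  · exact fun u hu v hv => exists_walk_in_componentWithin hu hv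
  · exact fun x hx => ⟨a, haA, (hS_adj x hx).symm⟩
  · exact fun z hz => ⟨(hB_sub hz).1, fun hzS => hzS.2.1 hz⟩
  · intro u hu w hws huw
    by_cases hwB : w ∈ B
    · exact .inl hwB
    · exact .inr ⟨hws, hwB, u, hu, huw.symm⟩
  · exact fun u hu v hv => exists_walk_in_componentWithin hu hv
  · exact fun x hx => hx.2.2

def IsSimplicialIn (G : SimpleGraph V) (s : Set V) (v : V) : Prop :=
  G.IsClique (G.neighborSet v ∩ s)

lemma IsFullComponent.isSimplicialIn {s S C : Set V} (hC : IsFullComponent G s S C) {v : V}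
    (hv : v ∈ C) (h : G.IsSimplicialIn (s ∩ (C ∪ S)) v) : G.IsSimplicialIn s v := by
  refine IsClique.subset ?_ h
  exact fun w hw => ⟨hw.1, hw.2, hC.adj_mem v hv w hw.2 hw.1⟩

end SimpleGraph

section

variable {V : Type*} {G : SimpleGraph V}

theorem IsChordal.adj_of_walks (hG : IsChordal G) {A B : Set V} (hAB : Disjoint A B)
    (hA_B : ∀ u ∈ A, ∀ w ∈ B, ¬G.Adj u w) {x y : V} (hxy : x ≠ y) {p q : G.Walk x y}
    (hp : ∀ z ∈ p.support, z = x ∨ z = y ∨ z ∈ A)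
    (hq : ∀ z ∈ q.support, z = x ∨ z = y ∨ z ∈ B) :
    G.Adj x y := by
  by_contra hxy_adj
  obtain ⟨P, hP, hP_chordless, hPp⟩ := p.exists_isPath_isChordless_support_subset
  obtain ⟨Q, hQ, hQ_chordless, hQq⟩ := q.exists_isPath_isChordless_support_subset
  have two_le_length (r : G.Walk x y) : 2 ≤ r.length := by
    have h0 : r.length ≠ 0 := fun h => hxy (r.eq_of_length_eq_zero h)
    have h1 : r.length ≠ 1 := fun h => hxy_adj (r.adj_of_length_eq_one h)
    omega
  have mem_A (z) (hzP : z ∈ P.support) (hzQ : z ∉ Q.support) : z ∈ A := by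
    rcases hp z (hPp hzP) with rfl | rfl | hz
    · exact absurd Q.start_mem_support hzQ
    · exact absurd Q.end_mem_support hzQ
    · exact hz
  have mem_B (z) (hzQ : z ∈ Q.support) (hzP : z ∉ P.support) : z ∈ B := by
    rcases hq z (hQq hzQ) with rfl | rfl | hz
    · exact absurd P.start_mem_support hzP
    · exact absurd P.end_mem_support hzP
    · exact hz
  have hdisj : P.support.tail.Disjoint Q.reverse.support.tail := by
    intro z hzP hzQ
    have hx := (List.nodup_cons.mp (P.cons_tail_support ▸ hP.support_nodup)).1
    have hy := (List.nodup_cons.mp (Q.reverse.cons_tail_support ▸ hQ.reverse.support_nodup)).1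
    rw [Walk.support_reverse] at hzQ
    have hzQ' := List.mem_reverse.mp (List.mem_of_mem_tail hzQ)
    rcases hp z (hPp (List.mem_of_mem_tail hzP)) with rfl | rfl | hzA
    · exact hx hzP
    · exact hy (by rwa [Walk.support_reverse])
    rcases hq z (hQq hzQ') with rfl | rfl | hzB
    · exact hx hzP
    · exact hy (by rwa [Walk.support_reverse])
    exact hAB.ne_of_mem hzA hzB rfl
  have hcycle := hP.isCycle_append hQ.reverse hdisj (.inl (two_le_length P))
  obtain ⟨u, w, hu, hw, huw, hchord⟩ :=
    hG x _ hcycle (by simpa using Nat.add_le_add (two_le_length P) (two_le_length Q))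
  simp only [Walk.edges_append, Walk.edges_reverse, List.mem_append, List.mem_reverse,
    not_or] at hchord
  simp only [Walk.mem_support_append_iff, Walk.support_reverse, List.mem_reverse] at hu hw
  by_cases huw_P : u ∈ P.support ∧ w ∈ P.support
  · exact hchord.1 (hP_chordless.mem_edges huw_P.1 huw_P.2 huw)
  by_cases huw_Q : u ∈ Q.support ∧ w ∈ Q.support
  · exact hchord.2 (hQ_chordless.mem_edges huw_Q.1 huw_Q.2 huw)
  rcases hu with hu | hu
  · have hw : w ∈ Q.support := hw.resolve_left fun hw => huw_P ⟨hu, hw⟩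
    exact hA_B u (mem_A u hu fun h => huw_Q ⟨h, hw⟩) w (mem_B w hw fun h => huw_P ⟨hu, h⟩)
      huw
  · have hw : w ∈ P.support := hw.resolve_right fun hw => huw_Q ⟨hu, hw⟩
    exact hA_B w (mem_A w hw fun h => huw_Q ⟨hu, h⟩) u (mem_B u hu fun h => huw_P ⟨h, hw⟩)
      huw.symm

theorem IsChordal.isClique_of_isFullComponent (hG : IsChordal G) {s S A B : Set V}
    (hA : IsFullComponent G s S A) (hB : IsFullComponent G s S B) (hAB : Disjoint A B) :
    G.IsClique S := by
  intro x hx y hy hxy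
  obtain ⟨p, hp⟩ := hA.exists_walk_through hx hy
  obtain ⟨q, hq⟩ := hB.exists_walk_through hx hy
  exact hG.adj_of_walks hAB (fun u hu w hw => hA.not_adj hB hAB hu hw) hxy hp hq

theorem IsChordal.exists_isSimplicialIn_notMem [Finite V] (hG : IsChordal G) (s : Set V)
    {K : Set V} (hK : G.IsClique K) {c : V} (hcs : c ∈ s) (hcK : c ∉ K) :
    ∃ v ∈ s, v ∉ K ∧ G.IsSimplicialIn s v := by
  induction s using WellFoundedLT.induction generalizing K c with
  | _ s ih =>
  by_cases hs : G.IsClique s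
  · exact ⟨c, hcs, hcK, hs.subset Set.inter_subset_right⟩
  obtain ⟨a, ha, b, hb, hab, hnadj⟩ : ∃ a ∈ s, ∃ b ∈ s, a ≠ b ∧ ¬G.Adj a b := by
    simpa [IsClique, Set.Pairwise] using hs
  obtain ⟨S, A, B, hA, hB, hAB⟩ := exists_isFullComponent_pair ha hb hab hnadj
  have hS := hG.isClique_of_isFullComponent hA hB hAB
  -- a clique meets at most one of the two sides
  wlog hKB : Disjoint K B generalizing A B
  · obtain ⟨w, hwK, hwB⟩ := Set.not_disjoint_iff.mp hKB
    refine this B A hB hA hAB.symm (Set.disjoint_left.mpr fun u huK huA => ?_)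
    exact hA.not_adj hB hAB huA hwB (hK huK hwK (hAB.ne_of_mem huA hwB))
  obtain ⟨a', ha'⟩ := hA.nonempty
  obtain ⟨b', hb'⟩ := hB.nonempty
  have hlt : s ∩ (B ∪ S) < s := by
    refine Set.ssubset_iff_of_subset Set.inter_subset_left |>.mpr ⟨a', (hA.subset ha').1, ?_⟩
    rintro ⟨-, ha'B | ha'S⟩
    · exact hAB.ne_of_mem ha' ha'B rfl
    · exact (hA.subset ha').2 ha'S
  obtain ⟨v, ⟨-, hvB | hvS⟩, hvS', hv⟩ :=
    ih _ hlt hS ⟨(hB.subset hb').1, .inl hb'⟩ (hB.subset hb').2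
  · exact ⟨v, (hB.subset hvB).1, hKB.notMem_of_mem_right hvB, hB.isSimplicialIn hvB hv⟩
  · exact absurd hvS hvS'

theorem IsChordal.exists_eliminationOrder [Finite V] (hG : IsChordal G) :
    ∀ (n : ℕ) (s : Finset V), s.card = n → ∃ f : Fin n → V, Function.Injective f ∧
      Set.range f = s ∧ ∀ i, G.IsClique {u | G.Adj (f i) u ∧ ∃ j, i < j ∧ f j = u} := by
  classical
  intro n
  induction n with
  | zero =>
    intro s hs
    refine ⟨Fin.elim0, Function.injective_of_subsingleton _, ?_, fun i => i.elim0⟩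
    simp [Finset.card_eq_zero.mp hs]
  | succ n ih =>
    intro s hs
    obtain ⟨c, hc⟩ : s.Nonempty := Finset.card_pos.mp (by omega)
    obtain ⟨v, hvs, -, hv⟩ := hG.exists_isSimplicialIn_notMem s G.isClique_empty
      (Finset.mem_coe.mpr hc) (Set.notMem_empty c)
    obtain ⟨f, hf, hf_range, hf_clique⟩ :=
      ih (s.erase v) (by rw [Finset.card_erase_of_mem hvs, hs]; rfl)
    refine ⟨Fin.cons v f, Fin.cons_injective_iff.mpr ⟨by simp [hf_range], hf⟩, ?_, ?_⟩
    · rw [Fin.range_cons, hf_range, Finset.coe_erase, Set.insert_sdiff_singleton,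
        Set.insert_eq_of_mem hvs]
    · intro i
      induction i using Fin.cases with
      | zero =>
        refine IsClique.subset ?_ hv
        rintro _ ⟨hvu, j, hj, rfl⟩
        induction j using Fin.cases with
        | zero => exact absurd hj (lt_irrefl 0)
        | succ k =>
          have hk : f k ∈ (s.erase v : Set V) := hf_range ▸ Set.mem_range_self k
          exact ⟨by simpa using hvu, Finset.mem_of_mem_erase hk⟩
      | succ i =>
        refine IsClique.subset ?_ (hf_clique i)
        rintro _ ⟨hiu, j, hj, rfl⟩
        induction j using Fin.cases with
        | zero => exact absurd hj (Fin.not_lt_zero _)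
        | succ k => exact ⟨by simpa using hiu, k, Fin.succ_lt_succ_iff.mp hj, by simp⟩

end

/-- A finite graph admits a perfect elimination order of its vertices if and
only if it is chordal. -/
theorem peo_iff_chordal {V : Type*} [Fintype V] (G : SimpleGraph V) :
    (∃ σ : Fin (Fintype.card V) ≃ V, IsPEO G σ) ↔ IsChordal G := by
  refine ⟨fun ⟨σ, hσ⟩ => hσ.isChordal, fun hG => ?_⟩
  obtain ⟨f, hf, hf_range, hf_clique⟩ :=
    hG.exists_eliminationOrder _ Finset.univ Finset.card_univ
  exact ⟨.ofBijective f ⟨hf, Set.range_eq_univ.mp (by simpa using hf_range)⟩, hf_clique⟩
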